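/- Let u be a C¹ function on an open subset of ℝ × ℝ⁴ with 1 - (u_t)² + |∇u|² > 0 and 1 + |∇u|² > 0. For each ξ ∈ ℝ⁴ \ {0}, the quadratic polynomial p(τ) = τ² - τ ∑_i b_i ξ_i - ∑_{i,j} a_{ij} ξ_i ξ_j, where a_{ij} = δ_{ij}(1 - u_t²/(1+|∇u|²)) - u_{x_i} u_{x_j}/(1+|∇u|²) and b_i = 2 u_{x_i} u_t/(1+|∇u|²), has discriminant Δ satisfying Δ ≥ 4 (1 - u_t² + |∇u|²) |ξ|² / (1+|∇u|²)², and in particular has two distinct real roots. -/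

import Mathlib

noncomputable section

def ut (u : ℝ → (Fin 4 → ℝ) → ℝ) (t : ℝ) (x : Fin 4 → ℝ) : ℝ :=
  deriv (fun s => u s x) t

def ux (u : ℝ → (Fin 4 → ℝ) → ℝ) (j : Fin 4) (t : ℝ) (x : Fin 4 → ℝ) : ℝ :=
  deriv (fun a => u t (Function.update x j a)) (x j)

def gradSq (u : ℝ → (Fin 4 → ℝ) → ℝ) (t : ℝ) (x : Fin 4 → ℝ) : ℝ :=
  ∑ j, (ux u j t x) ^ 2

def Wfun (u : ℝ → (Fin 4 → ℝ) → ℝ) (t : ℝ) (x : Fin 4 → ℝ) : ℝ :=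
  1 - (ut u t x) ^ 2 + gradSq u t x

/-- Principal coefficients `a_{ij}` of the quasilinear wave equation. -/
def acoef (u : ℝ → (Fin 4 → ℝ) → ℝ) (t : ℝ) (x : Fin 4 → ℝ) (i j : Fin 4) : ℝ :=
  (if i = j then (1 : ℝ) else 0) * (1 - (ut u t x) ^ 2 / (1 + gradSq u t x))
    - ux u i t x * ux u j t x / (1 + gradSq u t x)

/-- Coefficients `b_i` of the quasilinear wave equation. -/
def bcoef (u : ℝ → (Fin 4 → ℝ) → ℝ) (t : ℝ) (x : Fin 4 → ℝ) (i : Fin 4) : ℝ :=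
  2 * ux u i t x * ut u t x / (1 + gradSq u t x)

/-! The discriminant factors as `Δ = 4W/(1+|p|²)² · ((1+|p|²)|ξ|² - (p·ξ)²)` with
`W = 1 - v² + |p|²`, where `v = u_t` and `p = ∇u`. By Cauchy–Schwarz the last factor is at least
`|ξ|²`, so `Δ ≥ 4W|ξ|²/(1+|p|²)² > 0`, and `τ² - Bτ - A` has the two roots `(B ± √Δ)/2`. -/

open Finset

section Discriminant

variable {ι : Type*} [Fintype ι]

/-- With `v = u_t` and `p = ∇u`, `coeffB` and `coeffA` are `bcoef u t x` and `acoef u t x`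
up to unfolding of definitions. -/
def coeffB (v : ℝ) (p : ι → ℝ) (i : ι) : ℝ :=
  2 * p i * v / (1 + ∑ k, p k ^ 2)

theorem sum_coeffB_mul (v : ℝ) (p ξ : ι → ℝ) :
    ∑ i, coeffB v p i * ξ i = 2 * v * (∑ i, p i * ξ i) / (1 + ∑ k, p k ^ 2) := by
  rw [mul_sum, sum_div]
  exact sum_congr rfl fun i _ => by rw [coeffB]; ring

variable [DecidableEq ι]

def coeffA (v : ℝ) (p : ι → ℝ) (i j : ι) : ℝ :=
  (if i = j then (1 : ℝ) else 0) * (1 - v ^ 2 / (1 + ∑ k, p k ^ 2))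
    - p i * p j / (1 + ∑ k, p k ^ 2)

def charDiscr (v : ℝ) (p ξ : ι → ℝ) : ℝ :=
  (∑ i, coeffB v p i * ξ i) ^ 2 + 4 * ∑ i, ∑ j, coeffA v p i j * ξ i * ξ j

theorem sum_sum_kronecker_sub_outer_mul_mul (c d : ℝ) (p ξ : ι → ℝ) :
    ∑ i, ∑ j, ((if i = j then (1 : ℝ) else 0) * c - p i * p j / d) * ξ i * ξ j
      = c * ∑ i, ξ i ^ 2 - (∑ i, p i * ξ i) ^ 2 / d := by
  simp only [sub_mul, sum_sub_distrib, ite_mul, one_mul, zero_mul, sum_ite_eq, mem_univ, if_true]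
  rw [mul_sum, sq, sum_mul_sum, sum_div]
  congr 1
  · exact sum_congr rfl fun i _ => by ring
  · exact sum_congr rfl fun i _ => by rw [sum_div]; exact sum_congr rfl fun j _ => by ring

theorem charDiscr_eq (v : ℝ) (p ξ : ι → ℝ) :
    charDiscr v p ξ = 4 * (1 - v ^ 2 + ∑ k, p k ^ 2) / (1 + ∑ k, p k ^ 2) ^ 2
      * ((1 + ∑ k, p k ^ 2) * ∑ i, ξ i ^ 2 - (∑ i, p i * ξ i) ^ 2) := by
  have hD : 1 + ∑ k, p k ^ 2 ≠ 0 := by positivity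
  simp only [charDiscr, sum_coeffB_mul, coeffA]
  rw [sum_sum_kronecker_sub_outer_mul_mul]
  field_simp
  ring

theorem le_charDiscr (v : ℝ) (p ξ : ι → ℝ) (hW : 0 ≤ 1 - v ^ 2 + ∑ k, p k ^ 2) :
    4 * (1 - v ^ 2 + ∑ k, p k ^ 2) * (∑ i, ξ i ^ 2) / (1 + ∑ k, p k ^ 2) ^ 2
      ≤ charDiscr v p ξ := by
  have hCS : (∑ i, p i * ξ i) ^ 2 ≤ (∑ k, p k ^ 2) * ∑ i, ξ i ^ 2 :=
    sum_mul_sq_le_sq_mul_sq _ _ _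
  rw [charDiscr_eq, mul_div_right_comm]
  gcongr
  linarith

end Discriminant

theorem exists_ne_roots_of_discr_pos {A B : ℝ} (hΔ : 0 < B ^ 2 + 4 * A) :
    ∃ τ₁ τ₂ : ℝ, τ₁ ≠ τ₂ ∧ τ₁ ^ 2 - τ₁ * B - A = 0 ∧ τ₂ ^ 2 - τ₂ * B - A = 0 := by
  set r := √(B ^ 2 + 4 * A)
  have hr : r ^ 2 = B ^ 2 + 4 * A := Real.sq_sqrt hΔ.le
  have hr_pos : 0 < r := Real.sqrt_pos.mpr hΔ
  refine ⟨(B + r) / 2, (B - r) / 2, by linarith, ?_, ?_⟩ <;> linear_combination hr / 4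

theorem statement6_general
    (U : Set (ℝ × (Fin 4 → ℝ)))
    (u : ℝ → (Fin 4 → ℝ) → ℝ)
    (hW : ∀ p ∈ U, 0 < Wfun u p.1 p.2)
    (t : ℝ) (x : Fin 4 → ℝ) (hmem : (t, x) ∈ U)
    (ξ : Fin 4 → ℝ) (hξ : ξ ≠ 0) :
    (4 * Wfun u t x * (∑ i, (ξ i) ^ 2) / (1 + gradSq u t x) ^ 2
        ≤ (∑ i, bcoef u t x i * ξ i) ^ 2 + 4 * ∑ i, ∑ j, acoef u t x i j * ξ i * ξ j)
    ∧ ∃ τ₁ τ₂ : ℝ, τ₁ ≠ τ₂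
        ∧ τ₁ ^ 2 - τ₁ * (∑ i, bcoef u t x i * ξ i)
            - (∑ i, ∑ j, acoef u t x i j * ξ i * ξ j) = 0
        ∧ τ₂ ^ 2 - τ₂ * (∑ i, bcoef u t x i * ξ i)
            - (∑ i, ∑ j, acoef u t x i j * ξ i * ξ j) = 0 := by
  have hW₀ : 0 < Wfun u t x := hW _ hmem
  have hξ₀ : 0 < ∑ i, ξ i ^ 2 := by
    obtain ⟨i, hi⟩ := Function.ne_iff.mp hξ
    exact sum_pos' (fun j _ => sq_nonneg _) ⟨i, mem_univ i, sq_pos_of_ne_zero hi⟩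
  have hbound : 4 * Wfun u t x * (∑ i, ξ i ^ 2) / (1 + gradSq u t x) ^ 2
      ≤ charDiscr (ut u t x) (ux u · t x) ξ :=
    le_charDiscr _ _ _ hW₀.le
  have hΔ : 0 < charDiscr (ut u t x) (ux u · t x) ξ :=
    (div_pos (by positivity) (by unfold gradSq; positivity)).trans_le hbound
  exact ⟨hbound, exists_ne_roots_of_discr_pos hΔ⟩

/-- the characteristic polynomial
`p(τ) = τ² - τ ∑ bᵢξᵢ - ∑ a_{ij}ξᵢξⱼ` has discriminant
`Δ ≥ 4(1 - u_t² + |∇u|²)|ξ|²/(1+|∇u|²)²`; in particular it has two distinct real roots. -/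
theorem statement6
    (U : Set (ℝ × (Fin 4 → ℝ))) (hU : IsOpen U)
    (u : ℝ → (Fin 4 → ℝ) → ℝ)
    (hu : ContDiffOn ℝ 1 (fun p : ℝ × (Fin 4 → ℝ) => u p.1 p.2) U)
    (hW : ∀ p ∈ U, 0 < Wfun u p.1 p.2)
    (hG : ∀ p ∈ U, 0 < 1 + gradSq u p.1 p.2)
    (t : ℝ) (x : Fin 4 → ℝ) (hmem : (t, x) ∈ U)
    (ξ : Fin 4 → ℝ) (hξ : ξ ≠ 0) :
    (4 * Wfun u t x * (∑ i, (ξ i) ^ 2) / (1 + gradSq u t x) ^ 2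
        ≤ (∑ i, bcoef u t x i * ξ i) ^ 2 + 4 * ∑ i, ∑ j, acoef u t x i j * ξ i * ξ j)
    ∧ ∃ τ₁ τ₂ : ℝ, τ₁ ≠ τ₂
        ∧ τ₁ ^ 2 - τ₁ * (∑ i, bcoef u t x i * ξ i)
            - (∑ i, ∑ j, acoef u t x i j * ξ i * ξ j) = 0
        ∧ τ₂ ^ 2 - τ₂ * (∑ i, bcoef u t x i * ξ i)
            - (∑ i, ∑ j, acoef u t x i j * ξ i * ξ j) = 0 :=
  statement6_general U u hW t x hmem ξ hξ
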